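/- arXiv:1212.5662 — 2 statements merged into one kernel-verified Lean document; each statement's English description precedes it below -/
import Mathlib

section
/- Let Θ be a real n×m matrix, x ∈ ℤ^m, y ∈ ℤ^n, η ∈ ℝ^n, and ε > 0 with ‖η_1 y_1 + ... + η_n y_n‖ ≥ ε. Then ε ≤ n·(max_{1≤j≤n} |y_j|)·(max_{1≤j≤n} ‖L_j(x) − η_j‖) + m·(max_{1≤i≤m} |x_i|)·(max_{1≤i≤m} ‖ᵗL_i(y)‖). -/
open Filter MeasureTheory

/-- Distance from a real number `t` to the nearest integer, `‖t‖`. -/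
noncomputable def distInt (t : ℝ) : ℝ := |t - round t|

/-- The system of linear forms `L_j(x) = ∑_i Θ_j^i x_i` attached to a matrix. -/
noncomputable def lform {m n : ℕ} (Θ : Matrix (Fin n) (Fin m) ℝ) (x : Fin m → ℤ) (j : Fin n) :
    ℝ := ∑ i, Θ j i * (x i : ℝ)

/-- Sup-norm `max_i |x_i|` of an integer vector, as a real number. -/
noncomputable def supAbs {k : ℕ} (x : Fin k → ℤ) : ℝ := ⨆ i, |(x i : ℝ)|

/-- `ψ^Θ(t)`: the minimum of `max_j ‖L_j(x)‖` over nonzero integer `x` with `max_i |x_i| ≤ t`. -/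
noncomputable def psi {m n : ℕ} (Θ : Matrix (Fin n) (Fin m) ℝ) (t : ℝ) : ℝ :=
  sInf { v | ∃ x : Fin m → ℤ, x ≠ 0 ∧ supAbs x ≤ t ∧ v = ⨆ j, distInt (lform Θ x j) }

/-- `ψ^{Θ,α}(t)`: the inhomogeneous analogue of `ψ^Θ(t)`. -/
noncomputable def psiA {m n : ℕ} (Θ : Matrix (Fin n) (Fin m) ℝ) (α : Fin n → ℝ) (t : ℝ) : ℝ :=
  sInf { v | ∃ x : Fin m → ℤ, x ≠ 0 ∧ supAbs x ≤ t ∧ v = ⨆ j, distInt (lform Θ x j - α j) }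

/-- `Θ` is singular: `limsup_{t→∞} t^{m/n} ψ^Θ(t) = 0`. -/
noncomputable def IsSingular {m n : ℕ} (Θ : Matrix (Fin n) (Fin m) ℝ) : Prop :=
  Filter.limsup (fun t : ℝ => ENNReal.ofReal (t ^ ((m : ℝ) / (n : ℝ)) * psi Θ t))
    Filter.atTop = 0

/-- Property (1) (Khintchine's Chebyshev property). -/
def Chebyshev1 {m n : ℕ} (Θ : Matrix (Fin n) (Fin m) ℝ) : Prop :=
  ∀ α : Fin n → ℝ, ∃ Γ : ℝ, 0 < Γ ∧ ∀ T : ℝ, ∃ x : Fin m → ℤ,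
    T ≤ supAbs x ∧
      (⨆ j, distInt (lform Θ x j - α j)) < Γ * (supAbs x) ^ (-(m : ℝ) / (n : ℝ))

/-- Property (2) (Cassels' version, with `Γ` uniform in `α`). -/
def Chebyshev2 {m n : ℕ} (Θ : Matrix (Fin n) (Fin m) ℝ) : Prop :=
  ∃ Γ : ℝ, 0 < Γ ∧ ∀ α : Fin n → ℝ, ∀ T : ℝ, ∃ x : Fin m → ℤ,
    T ≤ supAbs x ∧
      (⨆ j, distInt (lform Θ x j - α j)) < Γ * (supAbs x) ^ (-(m : ℝ) / (n : ℝ))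

/-- `y` is a sequence of best approximations associated to the system of forms of `M`
(for the forms `ᵗL_i` of a matrix `Θ`, apply this to `M = Θᵀ`). -/
def IsBestApproxSeq {p q : ℕ} (M : Matrix (Fin p) (Fin q) ℝ) (y : ℕ → Fin q → ℤ) : Prop :=
  (∀ ν, y ν ≠ 0) ∧
  StrictMono (fun ν => supAbs (y ν)) ∧
  StrictAnti (fun ν => ⨆ i, distInt (lform M (y ν) i)) ∧
  ∀ ν, ∀ z : Fin q → ℤ, z ≠ 0 → supAbs z < supAbs (y (ν + 1)) →
    (⨆ i, distInt (lform M (y ν) i)) ≤ ⨆ i, distInt (lform M z i)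

/-- The constant `K = 2^{-(d-1)} d^{-1/2} σ`, where `σ` is the `(d-1)`-dimensional Hausdorff
measure of the central section `{z ∈ [-1,1]^d : z_1 + ... + z_d = 0}` of the cube. -/
noncomputable def Kconst (d : ℕ) : ℝ :=
  ((MeasureTheory.Measure.hausdorffMeasure ((d : ℝ) - 1) :
      MeasureTheory.Measure (EuclideanSpace ℝ (Fin d)))
    {z : EuclideanSpace ℝ (Fin d) | (∀ i, |z i| ≤ 1) ∧ ∑ i, z i = 0}).toReal /
    (2 ^ (d - 1) * Real.sqrt d)

/-- `R_{m,n} = max_{0<r<1} r^n (1-r)^m`. -/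
noncomputable def Rconst (m n : ℕ) : ℝ :=
  sSup {v : ℝ | ∃ r : ℝ, 0 < r ∧ r < 1 ∧ v = r ^ n * (1 - r) ^ m}

/-- `G_{m,n}(ε) = d^d (m^m n^n)^{d(d-1)} / (ε^d K R)^{d(d-1)}` with `d = m + n`. -/
noncomputable def Gconst (m n : ℕ) (ε : ℝ) : ℝ :=
  ((m : ℝ) + n) ^ (m + n) * ((m : ℝ) ^ m * (n : ℝ) ^ n) ^ ((m + n) * (m + n - 1)) /
    (ε ^ (m + n) * Kconst (m + n) * Rconst m n) ^ ((m + n) * (m + n - 1))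
lemma distInt_le_abs_sub_int (t : ℝ) (k : ℤ) : distInt t ≤ |t - k| := by
  by_cases hk : k = round t
  · simp [distInt, hk]
  · have h1 : |t - round t| ≤ 1 / 2 := abs_sub_round t
    have h2 : (1 : ℝ) ≤ |(round t : ℝ) - k| := by
      have : round t - k ≠ 0 := sub_ne_zero.mpr (Ne.symm hk)
      have := Int.one_le_abs this
      calc (1:ℝ) ≤ |(round t - k : ℤ)| := by exact_mod_cast this
        _ = |(round t : ℝ) - k| := by push_cast; ring_nf
    have h3 : |(round t : ℝ) - k| ≤ |t - round t| + |t - k| := by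
      calc |(round t : ℝ) - k| = |(t - k) - (t - round t)| := by ring_nf
        _ ≤ |t - k| + |t - round t| := abs_sub _ _
        _ = |t - round t| + |t - k| := by ring
    unfold distInt
    linarith

lemma distInt_nonneg (t : ℝ) : 0 ≤ distInt t := abs_nonneg _

/-- The transference inequality (inequality (8) of the paper): if `‖η_1 y_1 + ... + η_n y_n‖ ≥ ε`
then `ε ≤ n (max_j |y_j|)(max_j ‖L_j(x) - η_j‖) + m (max_i |x_i|)(max_i ‖ᵗL_i(y)‖)`. -/
theorem transference_inequality {m n : ℕ} (hm : 0 < m) (hn : 0 < n)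
    (Θ : Matrix (Fin n) (Fin m) ℝ) (x : Fin m → ℤ) (y : Fin n → ℤ) (η : Fin n → ℝ)
    (ε : ℝ) (hε : 0 < ε) (h : ε ≤ distInt (∑ j, η j * (y j : ℝ))) :
    ε ≤ (n : ℝ) * (⨆ j, |(y j : ℝ)|) * (⨆ j, distInt (lform Θ x j - η j)) +
        (m : ℝ) * (⨆ i, |(x i : ℝ)|) * (⨆ i, distInt (lform Θ.transpose y i)) := by
  haveI : Nonempty (Fin n) := Fin.pos_iff_nonempty.mp hn
  haveI : Nonempty (Fin m) := Fin.pos_iff_nonempty.mp hm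
  set S : ℝ := ∑ j, η j * (y j : ℝ) with hS
  set N : ℤ := (∑ i, x i * round (lform Θ.transpose y i)) -
      ∑ j, y j * round (lform Θ x j - η j) with hN
  have swap : ∑ j, (y j : ℝ) * lform Θ x j = ∑ i, (x i : ℝ) * lform Θ.transpose y i := by
    simp only [lform, Finset.mul_sum, Matrix.transpose_apply]
    rw [Finset.sum_comm]
    exact Finset.sum_congr rfl fun i _ => Finset.sum_congr rfl fun j _ => by ring
  have key : S - (N : ℝ) =
      (∑ j, (y j : ℝ) * ((η j - lform Θ x j) + (round (lform Θ x j - η j) : ℤ))) +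
      ∑ i, (x i : ℝ) * (lform Θ.transpose y i - (round (lform Θ.transpose y i) : ℤ)) := by
    have hcast : (N : ℝ) = (∑ i, (x i : ℝ) * (round (lform Θ.transpose y i) : ℤ)) -
        ∑ j, (y j : ℝ) * (round (lform Θ x j - η j) : ℤ) := by
      rw [hN]; push_cast; ring
    simp only [mul_add, mul_sub, Finset.sum_add_distrib, Finset.sum_sub_distrib]
    rw [hcast, hS]
    rw [← swap]
    ring_nf
    rw [Finset.sum_congr rfl (fun j _ => mul_comm (η j) ((y j : ℝ)))]
    ring
  -- sups
  set B1 := ⨆ j, |(y j : ℝ)| with hB1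
  set D1 := ⨆ j, distInt (lform Θ x j - η j) with hD1
  set B2 := ⨆ i, |(x i : ℝ)| with hB2
  set D2 := ⨆ i, distInt (lform Θ.transpose y i) with hD2
  have hB1le : ∀ j, |(y j : ℝ)| ≤ B1 := fun j =>
    le_ciSup (f := fun j => |(y j : ℝ)|) (Set.Finite.bddAbove (Set.finite_range _)) j
  have hD1le : ∀ j, distInt (lform Θ x j - η j) ≤ D1 := fun j =>
    le_ciSup (f := fun j => distInt (lform Θ x j - η j)) (Set.Finite.bddAbove (Set.finite_range _)) j
  have hB2le : ∀ i, |(x i : ℝ)| ≤ B2 := fun i =>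
    le_ciSup (f := fun i => |(x i : ℝ)|) (Set.Finite.bddAbove (Set.finite_range _)) i
  have hD2le : ∀ i, distInt (lform Θ.transpose y i) ≤ D2 := fun i =>
    le_ciSup (f := fun i => distInt (lform Θ.transpose y i)) (Set.Finite.bddAbove (Set.finite_range _)) i
  have hB1n : 0 ≤ B1 := le_trans (abs_nonneg _) (hB1le (Classical.arbitrary _))
  have hD1n : 0 ≤ D1 := le_trans (distInt_nonneg _) (hD1le (Classical.arbitrary _))
  have hB2n : 0 ≤ B2 := le_trans (abs_nonneg _) (hB2le (Classical.arbitrary _))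
  have hD2n : 0 ≤ D2 := le_trans (distInt_nonneg _) (hD2le (Classical.arbitrary _))
  have habs : |S - (N : ℝ)| ≤ (n : ℝ) * B1 * D1 + (m : ℝ) * B2 * D2 := by
    rw [key]
    refine (abs_add_le _ _).trans (add_le_add ?_ ?_)
    · calc |∑ j, (y j : ℝ) * ((η j - lform Θ x j) + (round (lform Θ x j - η j) : ℤ))|
          ≤ ∑ j, |(y j : ℝ) * ((η j - lform Θ x j) + (round (lform Θ x j - η j) : ℤ))| :=
            Finset.abs_sum_le_sum_abs _ _
        _ ≤ ∑ _j : Fin n, B1 * D1 := by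
            refine Finset.sum_le_sum fun j _ => ?_
            rw [abs_mul]
            have heq : |(η j - lform Θ x j) + ((round (lform Θ x j - η j) : ℤ) : ℝ)| =
                distInt (lform Θ x j - η j) := by
              rw [distInt, show (η j - lform Θ x j) + ((round (lform Θ x j - η j) : ℤ) : ℝ) =
                -((lform Θ x j - η j) - round (lform Θ x j - η j)) by push_cast; ring, abs_neg]
            rw [heq]
            exact mul_le_mul (hB1le j) (hD1le j) (distInt_nonneg _) hB1n
        _ = (n : ℝ) * B1 * D1 := by
            rw [Finset.sum_const, Finset.card_univ, Fintype.card_fin, nsmul_eq_mul]; ring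
    · calc |∑ i, (x i : ℝ) * (lform Θ.transpose y i - (round (lform Θ.transpose y i) : ℤ))|
          ≤ ∑ i, |(x i : ℝ) * (lform Θ.transpose y i - (round (lform Θ.transpose y i) : ℤ))| :=
            Finset.abs_sum_le_sum_abs _ _
        _ ≤ ∑ _i : Fin m, B2 * D2 := by
            refine Finset.sum_le_sum fun i _ => ?_
            rw [abs_mul]
            exact mul_le_mul (hB2le i) (hD2le i) (abs_nonneg _) hB2n
        _ = (m : ℝ) * B2 * D2 := by
            rw [Finset.sum_const, Finset.card_univ, Fintype.card_fin, nsmul_eq_mul]; ring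
  exact h.trans ((distInt_le_abs_sub_int S N).trans habs)
end

section
/- If the sequence of best approximations (y_ν) of ᵗΘ is infinite, then the set N_Θ = {η ∈ ℝ^n : inf_ν ‖η_1 y_{ν,1} + ... + η_n y_{ν,n}‖ > 0} has Lebesgue measure zero in ℝ^n. -/
/-!
`N_Θ` is the union over `ε = 1/q` of the closed sets where `‖⟨η, y_ν⟩‖ ≥ ε` for all `ν`; let `A`
be a subset of finite measure of one of them. The Dirichlet sums `D_K(t) = ∑_{k<K} e(kt)` satisfy
`|D_K(t)| ≤ 1/(2‖t‖)`, so `∫_A |D_K(⟨η, y_ν⟩)|² ≤ |A|/(4ε²)`. Expanding the square, the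
off-diagonal terms are Fourier coefficients of `1_A` at frequencies `(k - l) y_ν → ∞`, which
vanish in the limit by the Riemann–Lebesgue lemma, so the same integral tends to `K |A|`.
Taking `K > 1/(4ε²)` forces `|A| = 0`.
-/

open Filter MeasureTheory

open Real Complex
open scoped FourierTransform Topology ENNReal

lemma distInt_eq_norm (t : ℝ) : distInt t = ‖(t : UnitAddCircle)‖ :=
  UnitAddCircle.norm_eq.symm

lemma continuous_distInt : Continuous distInt := by
  simp_rw [funext distInt_eq_norm]
  exact continuous_norm.comp continuous_quotient_mk'

lemma fourierChar_sub_round (t : ℝ) : 𝐞 (t - round t) = 𝐞 t := by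
  rw [AddChar.map_sub_eq_div, Real.fourierChar_apply' (round t), Circle.exp_two_pi_mul_int,
    div_one]

lemma norm_fourierChar_sub_one (s : ℝ) : ‖(𝐞 s : ℂ) - 1‖ = 2 * |Real.sin (π * s)| := by
  rw [Real.fourierChar_apply, mul_comm, norm_exp_I_mul_ofReal_sub_one, norm_mul,
    Real.norm_eq_abs, show 2 * π * s / 2 = π * s by ring]
  norm_num

lemma four_mul_distInt_le_norm_fourierChar_sub_one (t : ℝ) :
    4 * distInt t ≤ ‖(𝐞 t : ℂ) - 1‖ := by
  have hs : |π * (t - round t)| ≤ π / 2 := by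
    rw [abs_mul, abs_of_pos pi_pos]
    nlinarith [abs_sub_round t, pi_pos]
  have h := mul_abs_le_abs_sin hs
  rw [abs_mul, abs_of_pos pi_pos, ← mul_assoc, div_mul_cancel₀ _ pi_ne_zero] at h
  rw [← fourierChar_sub_round, norm_fourierChar_sub_one, distInt]
  linarith

lemma two_mul_distInt_mul_norm_sum_fourierChar_le_one (K : ℕ) (t : ℝ) :
    2 * distInt t * ‖∑ k ∈ Finset.range K, (𝐞 (k * t) : ℂ)‖ ≤ 1 := by
  have hdist := four_mul_distInt_le_norm_fourierChar_sub_one t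
  set z : ℂ := ((𝐞 t : Circle) : ℂ)
  have hz (k : ℕ) : (𝐞 (k * t) : ℂ) = z ^ k := by
    rw [← nsmul_eq_mul, AddChar.map_nsmul_eq_pow, Circle.coe_pow]
  have hd : 0 ≤ distInt t := abs_nonneg _
  rcases eq_or_ne z 1 with h1 | h1
  · rw [h1, sub_self, norm_zero] at hdist
    simp [le_antisymm (by linarith) hd]
  have hpos : 0 < ‖z - 1‖ := norm_pos_iff.mpr (sub_ne_zero.mpr h1)
  have hnum : ‖z ^ K - 1‖ ≤ 2 := by
    calc ‖z ^ K - 1‖ ≤ ‖z ^ K‖ + ‖(1 : ℂ)‖ := norm_sub_le _ _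
      _ = 2 := by rw [norm_pow, Circle.norm_coe]; norm_num
  simp_rw [hz, geom_sum_eq h1, norm_div]
  rw [mul_div_assoc', div_le_one hpos]
  nlinarith [mul_le_mul_of_nonneg_left hnum hd]

lemma ofReal_norm_sum_fourierChar_sq (K : ℕ) (t : ℝ) :
    ((‖∑ k ∈ Finset.range K, (𝐞 (k * t) : ℂ)‖ ^ 2 : ℝ) : ℂ) =
      ∑ k ∈ Finset.range K, ∑ l ∈ Finset.range K, (𝐞 (((k : ℝ) - l) * t) : ℂ) := by
  rw [← Complex.normSq_eq_norm_sq, ← Complex.mul_conj, map_sum, Finset.sum_mul_sum]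
  refine Finset.sum_congr rfl fun k _ => Finset.sum_congr rfl fun l _ => ?_
  rw [← Circle.coe_inv_eq_conj, ← Circle.coe_mul, ← div_eq_mul_inv, ← AddChar.map_sub_eq_div,
    sub_mul]

lemma integrableOn_fourierChar_comp {X : Type*} [MeasurableSpace X] {μ : Measure X} {s : Set X}
    (hs : μ s < ∞) {f : X → ℝ} (hf : Measurable f) : IntegrableOn (fun x => (𝐞 (f x) : ℂ)) s μ :=
  .of_bound hs (by fun_prop) 1 (.of_forall fun _ => (Circle.norm_coe _).le)

section HaarMeasure

variable {V : Type*} [NormedAddCommGroup V] [NormedSpace ℝ V] [FiniteDimensional ℝ V]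
  [MeasurableSpace V] [BorelSpace V] {μ : Measure V} [μ.IsAddHaarMeasure]
  {L : ℕ → StrongDual ℝ V} {A : Set V}

lemma tendsto_setIntegral_fourierChar (hL : Tendsto (fun ν => ‖L ν‖) atTop atTop)
    (hA : MeasurableSet A) :
    Tendsto (fun ν => ∫ η in A, (𝐞 (L ν η) : ℂ) ∂μ) atTop (𝓝 0) := by
  have hneg : Tendsto (fun ν => -L ν) atTop (cocompact _) := by
    refine (tendsto_norm_atTop_iff_cobounded.mp ?_).mono_right Metric.cobounded_le_cocompact
    simpa only [norm_neg] using hL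
  refine ((tendsto_integral_exp_smul_cocompact (A.indicator 1 : V → ℂ) μ).comp hneg).congr
    fun ν => ?_
  rw [Function.comp_apply, ← integral_indicator hA]
  refine integral_congr_ae (.of_forall fun η => ?_)
  by_cases hη : η ∈ A <;> simp [hη, Circle.smul_def]

lemma tendsto_setIntegral_norm_sum_fourierChar_sq (K : ℕ)
    (hL : Tendsto (fun ν => ‖L ν‖) atTop atTop) (hA : MeasurableSet A) (hAfin : μ A < ∞) :
    Tendsto (fun ν => ∫ η in A, ((‖∑ k ∈ Finset.range K, (𝐞 (k * L ν η) : ℂ)‖ ^ 2 : ℝ) : ℂ) ∂μ)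
      atTop (𝓝 (K * μ.real A)) := by
  have hsum : (K * μ.real A : ℂ) =
      ∑ k ∈ Finset.range K, ∑ l ∈ Finset.range K, if k = l then (μ.real A : ℂ) else 0 := by
    rw [Finset.sum_congr rfl fun k hk => by rw [Finset.sum_ite_eq, if_pos hk]]
    simp
  simp_rw [ofReal_norm_sum_fourierChar_sq, hsum]
  have hint (c : ℝ) (ν : ℕ) : IntegrableOn (fun η => (𝐞 (c * L ν η) : ℂ)) A μ :=
    integrableOn_fourierChar_comp hAfin (by fun_prop)
  have hexpand (ν : ℕ) :
      ∫ η in A, ∑ k ∈ Finset.range K, ∑ l ∈ Finset.range K, (𝐞 (((k : ℝ) - l) * L ν η) : ℂ) ∂μ =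
        ∑ k ∈ Finset.range K, ∑ l ∈ Finset.range K,
          ∫ η in A, (𝐞 (((k : ℝ) - l) * L ν η) : ℂ) ∂μ := by
    rw [integral_finsetSum _ fun k _ => integrable_finsetSum _ fun l _ => hint _ ν]
    exact Finset.sum_congr rfl fun k _ => integral_finsetSum _ fun l _ => hint _ ν
  simp only [hexpand]
  refine tendsto_finsetSum _ fun k _ => tendsto_finsetSum _ fun l _ => ?_
  split_ifs with hkl
  · simp [hkl]
  · have hc : 0 < |(k : ℝ) - l| := abs_pos.mpr (sub_ne_zero.mpr (by exact_mod_cast hkl))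
    refine tendsto_setIntegral_fourierChar (L := fun ν => ((k : ℝ) - l) • L ν) ?_ hA
    simpa only [norm_smul, Real.norm_eq_abs] using hL.const_mul_atTop hc

lemma measure_eq_zero_of_forall_le_distInt (hL : Tendsto (fun ν => ‖L ν‖) atTop atTop) {ε : ℝ}
    (hε : 0 < ε) (hA : MeasurableSet A) (hAfin : μ A < ∞)
    (hAε : ∀ η ∈ A, ∀ ν, ε ≤ distInt (L ν η)) : μ A = 0 := by
  have hbound (K ν : ℕ) :
      ‖∫ η in A, ((‖∑ k ∈ Finset.range K, (𝐞 (k * L ν η) : ℂ)‖ ^ 2 : ℝ) : ℂ) ∂μ‖ ≤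
        (1 / (2 * ε)) ^ 2 * μ.real A := by
    refine norm_setIntegral_le_of_norm_le_const hAfin fun η hη => ?_
    rw [norm_real, Real.norm_of_nonneg (by positivity)]
    have hD : ‖∑ k ∈ Finset.range K, (𝐞 (k * L ν η) : ℂ)‖ ≤ 1 / (2 * ε) := by
      rw [le_div_iff₀' (by positivity)]
      nlinarith [hAε η hη ν, norm_nonneg (∑ k ∈ Finset.range K, (𝐞 (k * L ν η) : ℂ)),
        two_mul_distInt_mul_norm_sum_fourierChar_le_one K (L ν η)]
    gcongr
  have hK (K : ℕ) : K * μ.real A ≤ (1 / (2 * ε)) ^ 2 * μ.real A := by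
    have h := le_of_tendsto (tendsto_setIntegral_norm_sum_fourierChar_sq K hL hA hAfin).norm
      (.of_forall (hbound K))
    rwa [← ofReal_natCast, ← ofReal_mul, norm_real, Real.norm_of_nonneg (by positivity)] at h
  obtain ⟨K, hK'⟩ := exists_nat_gt ((1 / (2 * ε)) ^ 2)
  have hreal : μ.real A = 0 := by nlinarith [hK K, measureReal_nonneg (μ := μ) (s := A)]
  exact (measureReal_eq_zero_iff hAfin.ne).mp hreal

lemma measure_setOf_forall_le_distInt (hL : Tendsto (fun ν => ‖L ν‖) atTop atTop) {ε : ℝ}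
    (hε : 0 < ε) : μ {η | ∀ ν, ε ≤ distInt (L ν η)} = 0 := by
  have hclosed : IsClosed {η | ∀ ν, ε ≤ distInt (L ν η)} := by
    simp only [Set.ofPred_forall]
    exact isClosed_iInter fun ν =>
      isClosed_le continuous_const (continuous_distInt.comp (L ν).continuous)
  by_contra hpos
  obtain ⟨A, hA, hAS, hApos, hAfin⟩ :=
    Measure.exists_subset_measure_lt_top hclosed.measurableSet (pos_iff_ne_zero.mpr hpos)
  exact hApos.ne' (measure_eq_zero_of_forall_le_distInt hL hε hA hAfin hAS)

lemma measure_setOf_iInf_distInt_pos (hL : Tendsto (fun ν => ‖L ν‖) atTop atTop) :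
    μ {η | 0 < ⨅ ν, distInt (L ν η)} = 0 := by
  refine measure_mono_null (fun η hη => ?_)
    (measure_iUnion_null fun q : ℕ => measure_setOf_forall_le_distInt (μ := μ) hL
      (Nat.one_div_pos_of_nat (n := q)))
  obtain ⟨q, hq⟩ := exists_nat_one_div_lt (K := ℝ) hη
  exact Set.mem_iUnion.mpr ⟨q, fun ν =>
    hq.le.trans (ciInf_le ⟨0, Set.forall_mem_range.mpr fun _ => abs_nonneg _⟩ ν)⟩

end HaarMeasure

lemma exists_intCast_eq_supAbs {k : ℕ} (x : Fin k → ℤ) : ∃ z : ℤ, supAbs x = z := by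
  rcases isEmpty_or_nonempty (Fin k) with hk | hk
  · exact ⟨0, by simp [supAbs]⟩
  obtain ⟨j, hj⟩ := Finite.exists_max fun i => |(x i : ℝ)|
  refine ⟨|x j|, ?_⟩
  rw [supAbs, Int.cast_abs]
  exact le_antisymm (ciSup_le hj) (le_ciSup (Set.finite_range fun i => |(x i : ℝ)|).bddAbove j)

lemma tendsto_atTop_of_strictMono_of_forall_intCast {u : ℕ → ℝ} (hu : StrictMono u)
    (hint : ∀ ν, ∃ z : ℤ, u ν = z) : Tendsto u atTop atTop := by
  have hstep (ν : ℕ) : u ν + 1 ≤ u (ν + 1) := by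
    obtain ⟨a, ha⟩ := hint ν
    obtain ⟨b, hb⟩ := hint (ν + 1)
    have hab : a < b := by exact_mod_cast ha ▸ hb ▸ hu (Nat.lt_succ_self ν)
    rw [ha, hb]
    exact_mod_cast hab
  have hlin (ν : ℕ) : u 0 + ν ≤ u ν := by
    induction ν with
    | zero => simp
    | succ ν ih => push_cast; linarith [hstep ν]
  exact tendsto_atTop_mono hlin (tendsto_atTop_add_const_left _ _ tendsto_natCast_atTop_atTop)

noncomputable def dotProductCLM {k : ℕ} (x : Fin k → ℝ) : StrongDual ℝ (Fin k → ℝ) :=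
  ∑ j, x j • ContinuousLinearMap.proj j

lemma dotProductCLM_apply {k : ℕ} (x η : Fin k → ℝ) : dotProductCLM x η = ∑ j, x j * η j := by
  simp [dotProductCLM]

lemma abs_le_norm_dotProductCLM {k : ℕ} (x : Fin k → ℝ) (j : Fin k) :
    |x j| ≤ ‖dotProductCLM x‖ := by
  calc |x j| = ‖dotProductCLM x (Pi.single j 1)‖ := by
        simp [dotProductCLM_apply, Pi.single_apply]
    _ ≤ ‖dotProductCLM x‖ * ‖(Pi.single j 1 : Fin k → ℝ)‖ := (dotProductCLM x).le_opNorm _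
    _ = ‖dotProductCLM x‖ := by rw [Pi.norm_single, norm_one, mul_one]

lemma supAbs_le_norm_dotProductCLM {k : ℕ} (x : Fin k → ℤ) :
    supAbs x ≤ ‖dotProductCLM (fun j => (x j : ℝ))‖ :=
  Real.iSup_le (fun j => abs_le_norm_dotProductCLM (fun j => (x j : ℝ)) j) (norm_nonneg _)

theorem NTheta_measure_zero_general {m n : ℕ}
    (Θ : Matrix (Fin n) (Fin m) ℝ)
    (y : ℕ → Fin n → ℤ) (hy : IsBestApproxSeq Θ.transpose y) :
    MeasureTheory.volume
      {η : Fin n → ℝ | 0 < ⨅ ν : ℕ, distInt (∑ j, η j * (y ν j : ℝ))} = 0 := by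
  have hgrow : Tendsto (fun ν => supAbs (y ν)) atTop atTop :=
    tendsto_atTop_of_strictMono_of_forall_intCast hy.2.1 fun ν => exists_intCast_eq_supAbs (y ν)
  have hL : Tendsto (fun ν => ‖dotProductCLM (fun j => (y ν j : ℝ))‖) atTop atTop :=
    tendsto_atTop_mono (fun ν => supAbs_le_norm_dotProductCLM (y ν)) hgrow
  simpa only [dotProductCLM_apply, mul_comm] using measure_setOf_iInf_distInt_pos (μ := volume) hL

/-- If the sequence of best approximations of `ᵗΘ` is infinite, then `N_Θ` has Lebesgue
measure zero. -/
theorem NTheta_measure_zero {m n : ℕ} (hm : 0 < m) (hn : 0 < n)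
    (Θ : Matrix (Fin n) (Fin m) ℝ)
    (y : ℕ → Fin n → ℤ) (hy : IsBestApproxSeq Θ.transpose y) :
    MeasureTheory.volume
      {η : Fin n → ℝ | 0 < ⨅ ν : ℕ, distInt (∑ j, η j * (y ν j : ℝ))} = 0 :=
  NTheta_measure_zero_general Θ y hy
end
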